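/- arXiv:1407.6796 — 4 statements merged into one kernel-verified Lean document; each statement's English description precedes it below -/
import Mathlib

section
/- Let k ≥ 2 and 1 ≤ i ≤ k−1 be integers. Then in ℚ[t] one has t^i = Σ_{j=2}^{k} b^k_{i,j−1}·(1−t)^{k−j}·Q^E_j(t); equivalently, t^i/(1−t)^k = Σ_{j=1}^{k−1} (b^k_{i,j}/j!)·t·P_j(t)/(1−t)^{j+1}. -/
open Polynomial

open scoped Classical

/-- The bracket `[s_1,…,s_l]` of Bachmann–Kühn: the generating series of multiple
divisor sums, defined coefficientwise. -/
noncomputable def bracket (l : ℕ) (s : Fin l → ℕ) : PowerSeries ℚ :=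
  PowerSeries.mk fun N =>
    (∏ j, ((s j - 1).factorial : ℚ))⁻¹ *
      ∑ uv ∈ ((Finset.Iic fun _ => N : Finset (Fin l → ℕ)) ×ˢ
            (Finset.Iic fun _ => N : Finset (Fin l → ℕ))).filter
          (fun uv => StrictAnti uv.1 ∧ (∀ j, 0 < uv.1 j) ∧ (∀ j, 0 < uv.2 j) ∧
            ∑ j, uv.1 j * uv.2 j = N),
        ∏ j, (uv.2 j : ℚ) ^ (s j - 1)

/-- `MD^♯`: the ℚ-span of all brackets with all entries ≥ 2 (including `[∅] = 1`). -/
noncomputable def MDsharp : Submodule ℚ (PowerSeries ℚ) :=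
  Submodule.span ℚ {f | ∃ (l : ℕ) (s : Fin l → ℕ), (∀ j, 2 ≤ s j) ∧ f = bracket l s}

/-- The q-analogue `Z_Q(s_1,…,s_l) = Σ_{n_1 > … > n_l > 0} ∏_j Q_{s_j}(q^{n_j})/(1-q^{n_j})^{s_j}`,
defined coefficientwise (the coefficient of `q^N` only receives contributions from
tuples with all `n_j ≤ N`, since `Q_s(0) = 0`). -/
noncomputable def ZQ (Q : ℕ → Polynomial ℚ) (l : ℕ) (s : Fin l → ℕ) : PowerSeries ℚ :=
  PowerSeries.mk fun N =>
    ∑ n ∈ ((Finset.Iic fun _ => N : Finset (Fin l → ℕ))).filter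
        (fun n => StrictAnti n ∧ ∀ j, 0 < n j),
      PowerSeries.coeff N
        (∏ j, Polynomial.aeval ((PowerSeries.X : PowerSeries ℚ) ^ n j) (Q (s j)) *
          ((1 - (PowerSeries.X : PowerSeries ℚ) ^ n j) ^ s j)⁻¹)

/-- Okounkov's polynomials `Q^O_s`. -/
noncomputable def QO (s : ℕ) : Polynomial ℚ :=
  if s % 2 = 0 then X ^ (s / 2) else X ^ ((s - 1) / 2) * (1 + X)

/-- The ℚ-span of Okounkov's q-multiple zeta values. -/
noncomputable def qMZV : Submodule ℚ (PowerSeries ℚ) :=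
  Submodule.span ℚ {f | ∃ (l : ℕ) (s : Fin l → ℕ), (∀ j, 2 ≤ s j) ∧ f = ZQ QO l s}

/-- Eulerian numbers `A(n,m)`. -/
def eulerianNumber (n m : ℕ) : ℚ :=
  ∑ j ∈ Finset.range (m + 1), (-1 : ℚ) ^ j * ((n + 1).choose j) * ((m + 1 - j : ℕ) : ℚ) ^ n

/-- The normalized Eulerian polynomials `Q^E_s(t) = t·P_{s-1}(t)/(s-1)!` (for `s ≥ 2`). -/
noncomputable def QE (s : ℕ) : Polynomial ℚ :=
  (((s - 1).factorial : ℚ)⁻¹) •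
    ∑ m ∈ Finset.range (s - 1), C (eulerianNumber (s - 1) m) * X ^ (m + 1)

/-- The coefficients `λ^j_{a,b}` (with Mathlib's `bernoulli`, for which `B_1 = -1/2`). -/
def lam (a b j : ℕ) : ℚ :=
  (-1 : ℚ) ^ (b - 1) * ((a + b - j - 1).choose (a - j)) * _root_.bernoulli (a + b - j) /
    (a + b - j).factorial

/-- The binomial polynomial `C(t+k-1-i, k-1) = (t+k-1-i)(t+k-2-i)⋯(t+1-i)/(k-1)!`. -/
noncomputable def binomPoly (k i : ℕ) : Polynomial ℚ :=
  (((k - 1).factorial : ℚ)⁻¹) •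
    ∏ a ∈ Finset.range (k - 1), (X + C ((k : ℚ) - 1 - (i : ℚ) - (a : ℚ)))

/-- The numbers `b^k_{i,j}`, defined by `Σ_j (b^k_{i,j}/j!) t^j = C(t+k-1-i, k-1)`. -/
noncomputable def bcoef (k i j : ℕ) : ℚ := (j.factorial : ℚ) * (binomPoly k i).coeff j

/-- The operator `d = q·(d/dq)` on `ℚ⟦q⟧`. -/
noncomputable def qd (f : PowerSeries ℚ) : PowerSeries ℚ :=
  PowerSeries.mk fun N => (N : ℚ) * PowerSeries.coeff N f


/-- finite difference sum -/
noncomputable def Tsum (m n : ℕ) (N : ℚ) : ℚ :=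
  ∑ j ∈ Finset.range (m + 1), (-1 : ℚ) ^ j * (m.choose j) * (N - j) ^ n

lemma Tsum_succ (m n : ℕ) (N : ℚ) : Tsum (m + 1) n N = Tsum m n N - Tsum m n (N - 1) := by
  unfold Tsum
  rw [Finset.sum_range_succ' (fun j => (-1 : ℚ) ^ j * ((m+1).choose j) * (N - j) ^ n) (m+1)]
  have key : ∑ j ∈ Finset.range (m + 1),
      (-1 : ℚ) ^ (j+1) * (((m+1).choose (j+1) : ℕ) : ℚ) * (N - ((j+1 : ℕ) : ℚ)) ^ n
      = (∑ j ∈ Finset.range (m + 1), -((-1 : ℚ) ^ j * (m.choose j) * ((N-1) - j) ^ n))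
        + ∑ j ∈ Finset.range (m + 1), (-1 : ℚ) ^ (j+1) * (m.choose (j+1)) * (N - ((j+1:ℕ):ℚ)) ^ n := by
    rw [← Finset.sum_add_distrib]
    refine Finset.sum_congr rfl fun j _ => ?_
    rw [Nat.choose_succ_succ m j]
    push_cast
    ring_nf
    rw [Nat.add_comm 1 j]
  push_cast at key ⊢
  rw [key, Finset.sum_neg_distrib]
  have h3 : ∑ j ∈ Finset.range (m + 1), (-1 : ℚ) ^ (j+1) * (m.choose (j+1)) * (N - ((j+1:ℕ):ℚ)) ^ n
      = ∑ j ∈ Finset.range m, (-1 : ℚ) ^ (j+1) * (m.choose (j+1)) * (N - ((j+1:ℕ):ℚ)) ^ n := by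
    rw [Finset.sum_range_succ, Nat.choose_succ_self]
    simp
  have h4 : (∑ j ∈ Finset.range (m+1), (-1 : ℚ) ^ j * (m.choose j) * (N - j) ^ n)
      = (∑ j ∈ Finset.range m, (-1 : ℚ) ^ (j+1) * (m.choose (j+1)) * (N - ((j+1:ℕ):ℚ)) ^ n) + N ^ n := by
    rw [Finset.sum_range_succ' (fun j => (-1 : ℚ) ^ j * (m.choose j) * (N - j) ^ n) m]
    push_cast
    simp
  push_cast at h3 h4
  rw [h3, h4]
  simp only [Nat.choose_zero_right, Nat.cast_one, sub_zero]
  ring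

lemma Tsum_expand (m n : ℕ) (N : ℚ) :
    Tsum m n N = ∑ r ∈ Finset.range (n+1), (n.choose r : ℚ) * Tsum m r (N - 1) := by
  unfold Tsum
  have h : ∀ j : ℕ, (N - j)^n = ∑ r ∈ Finset.range (n+1), (N-1-(j:ℚ))^r * (n.choose r : ℚ) := by
    intro j
    have := add_pow (N-1-(j:ℚ)) 1 n
    simp only [one_pow, mul_one] at this
    rw [show N - 1 - (j:ℚ) + 1 = N - j by ring] at this
    exact this
  calc ∑ j ∈ Finset.range (m+1), (-1:ℚ)^j * (m.choose j) * (N - j)^n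
      = ∑ j ∈ Finset.range (m+1), ∑ r ∈ Finset.range (n+1),
          (n.choose r : ℚ) * ((-1:ℚ)^j * (m.choose j) * (N-1-(j:ℚ))^r) := by
        refine Finset.sum_congr rfl fun j _ => ?_
        rw [h j, Finset.mul_sum]
        exact Finset.sum_congr rfl fun r _ => by ring
    _ = ∑ r ∈ Finset.range (n+1), (n.choose r : ℚ) *
          ∑ j ∈ Finset.range (m+1), (-1:ℚ)^j * (m.choose j) * (N-1-(j:ℚ))^r := by
        rw [Finset.sum_comm]
        exact Finset.sum_congr rfl fun r _ => by rw [Finset.mul_sum]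

lemma Tsum_eq_zero : ∀ m n, n < m → ∀ N : ℚ, Tsum m n N = 0 := by
  intro m
  induction m with
  | zero => intro n hn; exact fun N => absurd hn (Nat.not_lt_zero n)
  | succ m ih =>
    intro n hn N
    rw [Tsum_succ, Tsum_expand m n N, Finset.sum_range_succ, Nat.choose_self]
    have : ∀ r ∈ Finset.range n, (n.choose r : ℚ) * Tsum m r (N - 1) = 0 := by
      intro r hr
      have hrn := Finset.mem_range.mp hr
      rw [ih r (by omega) (N - 1), mul_zero]
    rw [Finset.sum_eq_zero this]
    simp

lemma coeff_one_sub_pow (m q : ℕ) :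
    PowerSeries.coeff q ((1 - PowerSeries.X) ^ m) = (-1 : ℚ) ^ q * (m.choose q) := by
  have h : (((1 - X : ℚ[X]) ^ m : ℚ[X]) : PowerSeries ℚ) = (1 - PowerSeries.X) ^ m := by
    rw [Polynomial.coe_pow, Polynomial.coe_sub, Polynomial.coe_one, Polynomial.coe_X]
  rw [← h, Polynomial.coeff_coe]
  have h2 : (1 - X : ℚ[X]) = -(X + C (-1)) := by
    simp only [map_neg, map_one]; ring
  rw [h2, neg_pow]
  have h3 : ((-1 : ℚ[X]) ^ m) = C ((-1 : ℚ) ^ m) := by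
    simp only [map_pow, map_neg, map_one]
  rw [h3, Polynomial.coeff_C_mul, Polynomial.coeff_X_add_C_pow]
  rcases le_or_gt q m with hq | hq
  · have : m + (m - q) = 2 * (m - q) + q := by omega
    rw [← mul_assoc, ← pow_add, this, pow_add, pow_mul]
    norm_num
  · rw [Nat.choose_eq_zero_of_lt hq]
    simp



lemma eulerian_gf (n : ℕ) (hn : 1 ≤ n) :
    PowerSeries.mk (fun d => (d : ℚ) ^ n) * (1 - PowerSeries.X) ^ (n + 1)
      = ((∑ m ∈ Finset.range n, Polynomial.C (eulerianNumber n m) * Polynomial.X ^ (m + 1) :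
          Polynomial ℚ) : PowerSeries ℚ) := by
  ext N
  rw [PowerSeries.coeff_mul, Finset.Nat.sum_antidiagonal_eq_sum_range_succ_mk]
  simp only [PowerSeries.coeff_mk, coeff_one_sub_pow]
  rw [Polynomial.coeff_coe, Polynomial.finset_sum_coeff]
  simp only [Polynomial.coeff_C_mul, Polynomial.coeff_X_pow]
  have hflip : ∑ q ∈ Finset.range (N+1), ((q:ℕ):ℚ)^n * ((-1:ℚ)^(N-q) * (((n+1).choose (N-q) : ℕ) : ℚ))
      = ∑ q ∈ Finset.range (N+1), (((N - q : ℕ)):ℚ)^n * ((-1:ℚ)^q * (((n+1).choose q : ℕ) : ℚ)) := by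
    rw [← Finset.sum_range_reflect
      (fun q => ((q:ℕ):ℚ)^n * ((-1:ℚ)^(N-q) * (((n+1).choose (N-q) : ℕ) : ℚ))) (N+1)]
    refine Finset.sum_congr rfl fun q hq => ?_
    have hq' : q ≤ N := by have := Finset.mem_range.mp hq; omega
    have e1 : N + 1 - 1 - q = N - q := by omega
    have e2 : N - (N - q) = q := Nat.sub_sub_self hq'
    rw [e1, e2]
  rw [hflip]
  rcases Nat.lt_or_ge n N with hN | hN
  · -- N > n : both sides zero
    have hrhs : ∑ m ∈ Finset.range n, eulerianNumber n m * (if N = m + 1 then (1:ℚ) else 0) = 0 := by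
      refine Finset.sum_eq_zero fun m hm => ?_
      have : N ≠ m + 1 := by have := Finset.mem_range.mp hm; omega
      simp [this]
    rw [hrhs]
    have hsub : Finset.range (n + 2) ⊆ Finset.range (N + 1) := by
      intro x hx; simp only [Finset.mem_range] at *; omega
    have := Tsum_eq_zero (n + 1) n (by omega) (N : ℚ)
    unfold Tsum at this
    rw [← this]
    rw [← Finset.sum_subset hsub]
    · refine Finset.sum_congr rfl fun q hq => ?_
      have hq' : q ≤ N := by have := Finset.mem_range.mp hq; omega
      rw [Nat.cast_sub hq']
      ring
    · intro q _ hq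
      have : n + 1 < q := by simp only [Finset.mem_range] at hq; omega
      rw [Nat.choose_eq_zero_of_lt this]
      simp
  · rcases Nat.eq_zero_or_pos N with h0 | h0
    · subst h0
      simp [zero_pow (by omega : n ≠ 0)]
    · -- 1 ≤ N ≤ n : equals eulerianNumber n (N-1)
      have hrhs : ∑ m ∈ Finset.range n, eulerianNumber n m * (if N = m + 1 then (1:ℚ) else 0)
          = eulerianNumber n (N - 1) := by
        rw [Finset.sum_eq_single (N - 1)]
        · have : N = N - 1 + 1 := by omega
          simp [← this]
        · intro m _ hm
          have : N ≠ m + 1 := by omega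
          simp [this]
        · intro h
          exfalso; apply h; simp only [Finset.mem_range]; omega
      rw [hrhs]
      unfold eulerianNumber
      have hN1 : N - 1 + 1 = N := by omega
      rw [hN1, Finset.sum_range_succ]
      have hlast : ((N - N : ℕ) : ℚ) ^ n * ((-1 : ℚ) ^ N * ((n+1).choose N)) = 0 := by
        simp [zero_pow (by omega : n ≠ 0)]
      rw [hlast, add_zero]
      refine Finset.sum_congr rfl fun j hj => ?_
      ring


lemma binomPoly_eval (k i : ℕ) (x : ℚ) :
    Polynomial.eval x (binomPoly k i)
      = (((k-1).factorial : ℚ))⁻¹ * ∏ a ∈ Finset.range (k-1), (x + ((k:ℚ) - 1 - i - a)) := by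
  unfold binomPoly
  rw [Polynomial.eval_smul, Polynomial.eval_prod]
  simp [smul_eq_mul]

lemma binomPoly_eval_lt (k i d : ℕ) (hk : 2 ≤ k) (hi : 1 ≤ i) (hik : i ≤ k - 1) (hd : d < i) :
    Polynomial.eval ((d : ℕ) : ℚ) (binomPoly k i) = 0 := by
  rw [binomPoly_eval]
  have hmem : d + (k - 1) - i ∈ Finset.range (k - 1) := by
    simp only [Finset.mem_range]; omega
  rw [Finset.prod_eq_zero hmem, mul_zero]
  have h1 : ((d + (k - 1) - i : ℕ) : ℚ) = (d : ℚ) + (k : ℚ) - 1 - (i : ℚ) := by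
    have : i ≤ d + (k - 1) := by omega
    push_cast [Nat.cast_sub this, Nat.cast_sub (by omega : 1 ≤ k)]
    ring
  rw [h1]
  ring

lemma binomPoly_eval_ge (k i d : ℕ) (hk : 2 ≤ k) (hik : i ≤ k - 1) (hd : i ≤ d) :
    Polynomial.eval ((d : ℕ) : ℚ) (binomPoly k i)
      = (((d - i + (k - 1)).choose (k - 1) : ℕ) : ℚ) := by
  rw [binomPoly_eval]
  have hprod : ∏ a ∈ Finset.range (k-1), ((d:ℚ) + ((k:ℚ) - 1 - i - a))
      = (((d - i + (k - 1)).descFactorial (k - 1) : ℕ) : ℚ) := by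
    rw [Nat.descFactorial_eq_prod_range, Nat.cast_prod]
    refine Finset.prod_congr rfl fun a ha => ?_
    have ha' : a < k - 1 := Finset.mem_range.mp ha
    have h1 : a ≤ d - i + (k - 1) := by omega
    rw [Nat.cast_sub h1]
    push_cast [Nat.cast_sub hd, Nat.cast_sub (by omega : 1 ≤ k)]
    ring
  rw [hprod, Nat.descFactorial_eq_factorial_mul_choose, Nat.cast_mul]
  rw [← mul_assoc, inv_mul_cancel₀ (by exact_mod_cast (k-1).factorial_ne_zero), one_mul]

lemma binomPoly_coeff_zero (k i : ℕ) (hk : 2 ≤ k) (hi : 1 ≤ i) (hik : i ≤ k - 1) :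
    (binomPoly k i).coeff 0 = 0 := by
  rw [Polynomial.coeff_zero_eq_eval_zero]
  have := binomPoly_eval_lt k i 0 hk hi hik (by omega)
  simpa using this

lemma binomPoly_natDegree_lt (k i : ℕ) (hk : 2 ≤ k) : (binomPoly k i).natDegree < k := by
  unfold binomPoly
  rw [smul_eq_C_mul]
  refine lt_of_le_of_lt (Polynomial.natDegree_C_mul_le _ _) ?_
  refine lt_of_le_of_lt (Polynomial.natDegree_prod_le _ _) ?_
  refine lt_of_le_of_lt (Finset.sum_le_card_nsmul _ _ 1 fun a _ => ?_) ?_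
  · exact le_of_eq (Polynomial.natDegree_X_add_C _)
  · simp only [Finset.card_range, smul_eq_mul, mul_one]; omega

/-- for `k ≥ 2` and `1 ≤ i ≤ k-1`,
`t^i = Σ_{j=2}^k b^k_{i,j-1}·(1-t)^{k-j}·Q^E_j(t)`. -/
theorem X_pow_eq_sum_bcoef (k i : ℕ) (hk : 2 ≤ k) (hi : 1 ≤ i) (hik : i ≤ k - 1) :
    (X : Polynomial ℚ) ^ i =
      ∑ j ∈ Finset.Icc 2 k, C (bcoef k i (j - 1)) * ((1 - X) ^ (k - j) * QE j) := by
  have hinvadd : ∀ a b : ℕ, PowerSeries.invOneSubPow ℚ (a + b)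
      = PowerSeries.invOneSubPow ℚ a * PowerSeries.invOneSubPow ℚ b := by
    intro a b
    simp [PowerSeries.invOneSubPow_eq_inv_one_sub_pow, pow_add]
  set U := PowerSeries.invOneSubPow ℚ k with hUdef
  set S : PowerSeries ℚ := PowerSeries.mk fun d => Polynomial.eval ((d : ℕ) : ℚ) (binomPoly k i)
    with hSdef
  have hleft : ((X ^ i : Polynomial ℚ) : PowerSeries ℚ) * U.val = S := by
    rw [Polynomial.coe_pow, Polynomial.coe_X,
      PowerSeries.invOneSubPow_val_eq_mk_sub_one_add_choose_of_pos ℚ k (by omega : 0 < k)]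
    ext N
    rw [hSdef, PowerSeries.coeff_X_pow_mul']
    simp only [PowerSeries.coeff_mk]
    split_ifs with h
    · rw [binomPoly_eval_ge k i N hk hik h]
      have : k - 1 + (N - i) = N - i + (k - 1) := by omega
      rw [this]
    · rw [binomPoly_eval_lt k i N hk hi hik (by omega)]
  have hright : ((∑ j ∈ Finset.Icc 2 k, C (bcoef k i (j - 1)) * ((1 - X) ^ (k - j) * QE j) :
      Polynomial ℚ) : PowerSeries ℚ) * U.val = S := by
    have hcoe : ((∑ j ∈ Finset.Icc 2 k, C (bcoef k i (j - 1)) * ((1 - X) ^ (k - j) * QE j) :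
        Polynomial ℚ) : PowerSeries ℚ)
        = ∑ j ∈ Finset.Icc 2 k,
            ((C (bcoef k i (j - 1)) * ((1 - X) ^ (k - j) * QE j) : Polynomial ℚ) :
              PowerSeries ℚ) := by
      have h := map_sum (Polynomial.coeToPowerSeries.ringHom (R := ℚ))
        (fun j => C (bcoef k i (j - 1)) * ((1 - X) ^ (k - j) * QE j)) (Finset.Icc 2 k)
      simpa only [Polynomial.coeToPowerSeries.ringHom_apply] using h
    rw [hcoe, Finset.sum_mul]
    have hterm : ∀ j ∈ Finset.Icc 2 k,
        ((C (bcoef k i (j - 1)) * ((1 - X) ^ (k - j) * QE j) : Polynomial ℚ) :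
          PowerSeries ℚ) * U.val
        = PowerSeries.C ((binomPoly k i).coeff (j - 1)) *
            PowerSeries.mk (fun d => ((d : ℕ) : ℚ) ^ (j - 1)) := by
      intro j hj
      obtain ⟨hj2, hjk⟩ := Finset.mem_Icc.mp hj
      have hQE : (QE j : Polynomial ℚ)
          = C (((j - 1).factorial : ℚ)⁻¹) *
              ∑ m ∈ Finset.range (j - 1), C (eulerianNumber (j - 1) m) * X ^ (m + 1) := by
        rw [QE, smul_eq_C_mul]
      rw [hQE, Polynomial.coe_mul, Polynomial.coe_mul, Polynomial.coe_mul, Polynomial.coe_pow,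
        Polynomial.coe_sub, Polynomial.coe_one, Polynomial.coe_X, Polynomial.coe_C,
        Polynomial.coe_C]
      have hsplit : U = PowerSeries.invOneSubPow ℚ (k - j) * PowerSeries.invOneSubPow ℚ j := by
        rw [hUdef, ← hinvadd]
        congr 1
        omega
      rw [hsplit, Units.val_mul]
      have hone : (1 - PowerSeries.X : PowerSeries ℚ) ^ (k - j) *
            ((PowerSeries.invOneSubPow ℚ (k - j)).val * (PowerSeries.invOneSubPow ℚ j).val)
          = (PowerSeries.invOneSubPow ℚ j).val := by
        rw [← mul_assoc, ← PowerSeries.invOneSubPow_inv_eq_one_sub_pow,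
          (PowerSeries.invOneSubPow ℚ (k - j)).inv_val, one_mul]
      have hgf := eulerian_gf (j - 1) (by omega)
      have hj1 : j - 1 + 1 = j := by omega
      rw [hj1] at hgf
      have hps : ((∑ m ∈ Finset.range (j - 1), C (eulerianNumber (j - 1) m) * X ^ (m + 1) :
            Polynomial ℚ) : PowerSeries ℚ) * (PowerSeries.invOneSubPow ℚ j).val
          = PowerSeries.mk (fun d => ((d : ℕ) : ℚ) ^ (j - 1)) := by
        rw [← hgf, mul_assoc, ← PowerSeries.invOneSubPow_inv_eq_one_sub_pow ℚ j,
          (PowerSeries.invOneSubPow ℚ j).inv_val, mul_one]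
      calc PowerSeries.C (bcoef k i (j - 1)) *
            ((1 - PowerSeries.X) ^ (k - j) * (PowerSeries.C (((j - 1).factorial : ℚ)⁻¹) *
              ((∑ m ∈ Finset.range (j - 1), C (eulerianNumber (j - 1) m) * X ^ (m + 1) :
                Polynomial ℚ) : PowerSeries ℚ))) *
            ((PowerSeries.invOneSubPow ℚ (k - j)).val * (PowerSeries.invOneSubPow ℚ j).val)
          = (PowerSeries.C (bcoef k i (j - 1)) * PowerSeries.C (((j - 1).factorial : ℚ)⁻¹)) *
            (((1 - PowerSeries.X) ^ (k - j) *
              ((PowerSeries.invOneSubPow ℚ (k - j)).val * (PowerSeries.invOneSubPow ℚ j).val)) *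
            (((∑ m ∈ Finset.range (j - 1), C (eulerianNumber (j - 1) m) * X ^ (m + 1) :
                Polynomial ℚ) : PowerSeries ℚ))) := by ring
        _ = PowerSeries.C ((binomPoly k i).coeff (j - 1)) *
            PowerSeries.mk (fun d => ((d : ℕ) : ℚ) ^ (j - 1)) := by
            rw [hone, ← map_mul]
            have hb : bcoef k i (j - 1) * (((j - 1).factorial : ℚ))⁻¹
                = (binomPoly k i).coeff (j - 1) := by
              rw [bcoef, mul_comm ((j-1).factorial : ℚ), mul_assoc,
                mul_inv_cancel₀ (by exact_mod_cast (j-1).factorial_ne_zero), mul_one]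
            rw [hb]
            congr 1
            rw [mul_comm]
            exact hps
    rw [Finset.sum_congr rfl hterm]
    -- now sum over j of C(coeff (j-1)) * mk (d ^ (j-1)) equals S
    ext N
    rw [hSdef]
    simp only [PowerSeries.coeff_mk, map_sum, PowerSeries.coeff_C_mul]
    have heval := Polynomial.eval_eq_sum_range' (binomPoly_natDegree_lt k i hk) ((N : ℕ) : ℚ)
    rw [heval]
    rw [Finset.range_eq_Ico, Finset.sum_eq_sum_Ico_succ_bot (by omega : 0 < k)]
    rw [binomPoly_coeff_zero k i hk hi hik, zero_mul, zero_add]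
    rw [show Finset.Ico 1 k = Finset.Icc 1 (k - 1) from by
      rw [← Finset.Ico_add_one_right_eq_Icc]; congr 1; omega]
    refine Finset.sum_nbij' (fun j => j - 1) (fun r => r + 1) ?_ ?_ ?_ ?_ ?_
    · intro a ha; obtain ⟨h1, h2⟩ := Finset.mem_Icc.mp ha; simp only [Finset.mem_Icc]; omega
    · intro a ha; obtain ⟨h1, h2⟩ := Finset.mem_Icc.mp ha; simp only [Finset.mem_Icc]; omega
    · intro a ha; obtain ⟨h1, h2⟩ := Finset.mem_Icc.mp ha; show a - 1 + 1 = a; omega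
    · intro a ha; show a + 1 - 1 = a; omega
    · intro a ha
      simp only [PowerSeries.coeff_mk]
  have hU0 : (U.val : PowerSeries ℚ) ≠ 0 := Units.ne_zero U
  have key := hleft.trans hright.symm
  have := mul_right_cancel₀ hU0 key
  rw [← Polynomial.coe_inj]
  exact this
end

section
/- For every integer k ≥ 1, the Okounkov q-zeta value of odd weight satisfies Z(2k+1) = Σ_{j=2}^{2k+1} (b^{2k+1}_{k,j−1} + b^{2k+1}_{k+1,j−1})·[j] in ℚ⟦q⟧. -/
open Polynomial

open scoped Classical

noncomputable def Dser (n s : ℕ) : PowerSeries ℚ :=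
  PowerSeries.mk fun N => if n ∣ N then ((N / n + s).choose s : ℚ) else 0

lemma coeff_one_sub_Xpow_mul (n : ℕ) (g : PowerSeries ℚ) (N : ℕ) :
    PowerSeries.coeff N ((1 - (PowerSeries.X : PowerSeries ℚ) ^ n) * g) =
      PowerSeries.coeff N g - if n ≤ N then PowerSeries.coeff (N - n) g else 0 := by
  rw [sub_mul, one_mul, map_sub, PowerSeries.coeff_X_pow_mul']

lemma dvd_sub_iff (n N : ℕ) (hle : n ≤ N) : n ∣ (N - n) ↔ n ∣ N := by
  constructor
  · intro h
    have := Nat.dvd_add h (dvd_refl n)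
    rwa [Nat.sub_add_cancel hle] at this
  · intro h; exact Nat.dvd_sub h dvd_rfl

lemma step0 (n : ℕ) (hn : 1 ≤ n) : (1 - (PowerSeries.X : PowerSeries ℚ) ^ n) * Dser n 0 = 1 := by
  ext N
  rw [coeff_one_sub_Xpow_mul]
  simp only [Dser, PowerSeries.coeff_mk, Nat.choose_zero_right, Nat.cast_one,
    PowerSeries.coeff_one]
  rcases Nat.eq_zero_or_pos N with rfl | hN
  · rw [if_pos (dvd_zero n), if_neg (show ¬ n ≤ 0 by omega), if_pos rfl]; ring
  · rw [if_neg (show ¬ N = 0 by omega)]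
    by_cases hd : n ∣ N
    · have hle : n ≤ N := Nat.le_of_dvd hN hd
      rw [if_pos hd, if_pos hle, if_pos ((dvd_sub_iff n N hle).mpr hd)]; ring
    · rw [if_neg hd]
      by_cases hle : n ≤ N
      · rw [if_pos hle, if_neg (fun h => hd ((dvd_sub_iff n N hle).mp h))]; ring
      · rw [if_neg hle]; ring

lemma stepS (n : ℕ) (hn : 1 ≤ n) (s : ℕ) :
    (1 - (PowerSeries.X : PowerSeries ℚ) ^ n) * Dser n (s + 1) = Dser n s := by
  ext N
  rw [coeff_one_sub_Xpow_mul]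
  simp only [Dser, PowerSeries.coeff_mk]
  by_cases hd : n ∣ N
  · obtain ⟨q, rfl⟩ := hd
    have hq : n * q / n = q := Nat.mul_div_cancel_left q (by omega)
    rw [if_pos (Dvd.intro q rfl), if_pos (Dvd.intro q rfl), hq]
    rcases Nat.eq_zero_or_pos q with rfl | hqpos
    · rw [if_neg (show ¬ n ≤ n * 0 by omega)]
      simp
    · obtain ⟨p, rfl⟩ : ∃ p, q = p + 1 := ⟨q - 1, by omega⟩
      have hle : n ≤ n * (p + 1) := by nlinarith
      have hsub : n * (p + 1) - n = n * p := by ring_nf; omega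
      have hp : n * p / n = p := Nat.mul_div_cancel_left p (by omega)
      rw [if_pos hle, hsub, if_pos (Dvd.intro p rfl), hp]
      have hch : (p + 1 + (s + 1)).choose (s + 1) =
          (p + s + 1).choose s + (p + s + 1).choose (s + 1) := by
        have := Nat.choose_succ_succ (p + s + 1) s
        convert this using 2 <;> omega
      rw [hch]
      push_cast
      have : p + (s + 1) = p + s + 1 := by omega
      rw [this]
      have : p + 1 + s = p + s + 1 := by omega
      rw [this]
      ring
  · rw [if_neg hd, if_neg hd]
    by_cases hle : n ≤ N
    · rw [if_pos hle, if_neg (fun h => hd ((dvd_sub_iff n N hle).mp h))]; ring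
    · rw [if_neg hle]; ring

lemma pow_mul_D (n : ℕ) (hn : 1 ≤ n) (s : ℕ) :
    (1 - (PowerSeries.X : PowerSeries ℚ) ^ n : PowerSeries ℚ) ^ (s + 1) * Dser n s = 1 := by
  induction s with
  | zero => simpa using step0 n hn
  | succ s ih =>
      have : (1 - (PowerSeries.X : PowerSeries ℚ) ^ n : PowerSeries ℚ) ^ (s + 2) * Dser n (s + 1) =
          (1 - (PowerSeries.X : PowerSeries ℚ) ^ n) ^ (s + 1) * ((1 - (PowerSeries.X : PowerSeries ℚ) ^ n) * Dser n (s + 1)) := by ring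
      rw [this, stepS n hn s, ih]

lemma inv_eq_D (n : ℕ) (hn : 1 ≤ n) (s : ℕ) :
    (((1 - (PowerSeries.X : PowerSeries ℚ) ^ n : PowerSeries ℚ) ^ (s + 1))⁻¹) = Dser n s := by
  have hc : PowerSeries.constantCoeff ((1 - (PowerSeries.X : PowerSeries ℚ) ^ n) ^ (s + 1)) ≠ 0 := by
    rw [map_pow, map_sub, map_one, map_pow, PowerSeries.constantCoeff_X,
      zero_pow (by omega), sub_zero, one_pow]
    exact one_ne_zero
  rw [PowerSeries.inv_eq_iff_mul_eq_one hc]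
  rw [mul_comm]
  exact pow_mul_D n hn s

lemma prod_cast_sub (m : ℕ) : ∀ n : ℕ,
    ∏ a ∈ Finset.range n, ((m : ℚ) - a) = (m.descFactorial n : ℚ)
  | 0 => by simp
  | (n + 1) => by
    rw [Finset.prod_range_succ, prod_cast_sub m n, Nat.descFactorial_succ]
    rcases lt_trichotomy n m with h | rfl | h
    · rw [Nat.cast_mul, Nat.cast_sub (by omega)]
      push_cast; ring
    · simp
    · rw [Nat.descFactorial_eq_zero_iff_lt.mpr h, Nat.sub_eq_zero_of_le (by omega)]
      simp

lemma binomPoly_eval_s12 (K i b : ℕ) (hi : i ≤ K) :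
    Polynomial.eval (b : ℚ) (binomPoly (K + 1) i) = ((b + K - i).choose K : ℚ) := by
  have hK : K + 1 - 1 = K := by omega
  rw [binomPoly, hK, eval_smul, eval_prod]
  have : ∀ a ∈ Finset.range K, eval (b : ℚ) (X + C (((K+1 : ℕ) : ℚ) - 1 - i - a)) =
      (((b + K - i : ℕ) : ℚ) - a) := by
    intro a _
    rw [eval_add, eval_X, eval_C, Nat.cast_sub (by omega)]
    push_cast; ring
  rw [Finset.prod_congr rfl this, prod_cast_sub,
    Nat.descFactorial_eq_factorial_mul_choose]
  push_cast
  rw [smul_eq_mul, ← mul_assoc, inv_mul_cancel₀ (by positivity), one_mul]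

lemma binomPoly_natDegree_le (K i : ℕ) : (binomPoly (K + 1) i).natDegree ≤ K := by
  rw [binomPoly]
  refine le_trans (natDegree_smul_le _ _) (le_trans (natDegree_prod_le _ _) ?_)
  have : ∀ a ∈ Finset.range (K + 1 - 1), (X + C (((K+1 : ℕ) : ℚ) - 1 - i - a)).natDegree ≤ 1 := by
    intro a _
    rw [natDegree_X_add_C]
  refine le_trans (Finset.sum_le_sum this) ?_
  simp

lemma binomPoly_coeff_zero_s12 (K i : ℕ) (hi1 : 1 ≤ i) (hi : i ≤ K) :
    (binomPoly (K + 1) i).coeff 0 = 0 := by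
  rw [Polynomial.coeff_zero_eq_eval_zero]
  have := binomPoly_eval_s12 K i 0 hi
  rw [Nat.cast_zero] at this
  rw [this, Nat.choose_eq_zero_of_lt (by omega), Nat.cast_zero]

lemma sum_coeff_eval (k : ℕ) (P : Polynomial ℚ) (hdeg : P.natDegree ≤ 2 * k)
    (h0 : P.coeff 0 = 0) (b : ℚ) :
    ∑ j ∈ Finset.Icc 2 (2 * k + 1), P.coeff (j - 1) * b ^ (j - 1) = P.eval b := by
  rw [Polynomial.eval_eq_sum_range' (show P.natDegree < 2 * k + 1 by omega),
    Finset.sum_range_succ', h0, zero_mul, add_zero]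
  refine Finset.sum_nbij' (fun j => j - 2) (fun i => i + 2) ?_ ?_ ?_ ?_ ?_
  · intro j hj; simp only [Finset.mem_Icc] at hj; simp only [Finset.mem_range]; omega
  · intro i hi; simp only [Finset.mem_range] at hi; simp only [Finset.mem_Icc]; omega
  · intro j hj; simp only [Finset.mem_Icc] at hj; omega
  · intro i hi; simp only [Finset.mem_range] at hi; omega
  · intro j hj; simp only [Finset.mem_Icc] at hj
    have : j - 2 + 1 = j - 1 := by omega
    rw [this]

lemma bcoef_mul_inv (K i j : ℕ) (hj : 1 ≤ j) :
    bcoef K i (j - 1) * (((j - 1).factorial : ℚ))⁻¹ = (binomPoly K i).coeff (j - 1) := by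
  rw [bcoef, mul_comm ((((j - 1).factorial : ℚ))) _, mul_assoc,
    mul_inv_cancel₀ (by positivity), mul_one]

lemma key (k b : ℕ) (hk : 1 ≤ k) (hb : 1 ≤ b) :
    ∑ j ∈ Finset.Icc 2 (2 * k + 1),
      (bcoef (2 * k + 1) k (j - 1) + bcoef (2 * k + 1) (k + 1) (j - 1)) *
        ((j - 1).factorial : ℚ)⁻¹ * (b : ℚ) ^ (j - 1)
    = ((b + k).choose (2 * k) : ℚ) + ((b + k - 1).choose (2 * k) : ℚ) := by
  have hsplit : ∀ j ∈ Finset.Icc 2 (2 * k + 1),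
      (bcoef (2 * k + 1) k (j - 1) + bcoef (2 * k + 1) (k + 1) (j - 1)) *
        ((j - 1).factorial : ℚ)⁻¹ * (b : ℚ) ^ (j - 1) =
      (binomPoly (2 * k + 1) k).coeff (j - 1) * (b : ℚ) ^ (j - 1) +
      (binomPoly (2 * k + 1) (k + 1)).coeff (j - 1) * (b : ℚ) ^ (j - 1) := by
    intro j hj
    simp only [Finset.mem_Icc] at hj
    rw [add_mul, add_mul, bcoef_mul_inv _ _ _ (by omega), bcoef_mul_inv _ _ _ (by omega)]
  rw [Finset.sum_congr rfl hsplit, Finset.sum_add_distrib]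
  have e1 : binomPoly (2 * k + 1) k = binomPoly (2 * k + 1) k := rfl
  have h1 := sum_coeff_eval k (binomPoly (2 * k + 1) k) (binomPoly_natDegree_le (2 * k) k)
      (binomPoly_coeff_zero_s12 (2 * k) k hk (by omega)) (b : ℚ)
  have h2 := sum_coeff_eval k (binomPoly (2 * k + 1) (k + 1)) (binomPoly_natDegree_le (2 * k) (k + 1))
      (binomPoly_coeff_zero_s12 (2 * k) (k + 1) (by omega) (by omega)) (b : ℚ)
  rw [h1, h2, binomPoly_eval_s12 (2 * k) k b (by omega), binomPoly_eval_s12 (2 * k) (k + 1) b (by omega)]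
  congr 3 <;> omega

lemma strictAnti_fin_one {α : Type*} [Preorder α] (f : Fin 1 → α) : StrictAnti f := by
  intro a b hab
  exact absurd hab (by rw [Subsingleton.elim a b]; exact lt_irrefl b)

lemma QO_odd (k : ℕ) (f : PowerSeries ℚ) :
    Polynomial.aeval f (QO (2 * k + 1)) = f ^ k * (1 + f) := by
  rw [QO, if_neg (by omega)]
  have h : (2 * k + 1 - 1) / 2 = k := by omega
  rw [h, map_mul, map_pow, Polynomial.aeval_X, map_add, map_one, Polynomial.aeval_X]

lemma coeff_term (k n N : ℕ) (hk : 1 ≤ k) (hn : 1 ≤ n) :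
    PowerSeries.coeff N
        (((PowerSeries.X : PowerSeries ℚ) ^ (n * k) + PowerSeries.X ^ (n * k + n)) *
          Dser n (2 * k)) =
      if n ∣ N then
        (((N / n + k).choose (2 * k) : ℚ) + ((N / n + k - 1).choose (2 * k) : ℚ))
      else 0 := by
  rw [add_mul, map_add, PowerSeries.coeff_X_pow_mul', PowerSeries.coeff_X_pow_mul']
  simp only [Dser, PowerSeries.coeff_mk]
  by_cases hd : n ∣ N
  · obtain ⟨v, rfl⟩ := hd
    rw [if_pos (Dvd.intro v rfl), Nat.mul_div_cancel_left v (by omega)]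
    by_cases hv : k ≤ v
    · obtain ⟨w, rfl⟩ := Nat.exists_eq_add_of_le hv
      have h1 : n * (k + w) - n * k = n * w := by
        have : n * (k + w) = n * k + n * w := by ring
        omega
      have h2 : n * k ≤ n * (k + w) := Nat.mul_le_mul_left n (by omega)
      rw [if_pos h2, h1, if_pos (Dvd.intro w rfl), Nat.mul_div_cancel_left w (by omega)]
      have e1 : w + 2 * k = k + w + k := by omega
      rw [e1]
      by_cases hw : 1 ≤ w
      · obtain ⟨w', rfl⟩ := Nat.exists_eq_add_of_le hw
        have h3 : n * k + n ≤ n * (k + (1 + w')) := by nlinarith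
        have h4 : n * (k + (1 + w')) - (n * k + n) = n * w' := by
          have : n * (k + (1 + w')) = n * k + n + n * w' := by ring
          omega
        rw [if_pos h3, h4, if_pos (Dvd.intro w' rfl), Nat.mul_div_cancel_left w' (by omega)]
        have e2 : w' + 2 * k = k + (1 + w') + k - 1 := by omega
        rw [e2]
      · have hw0 : w = 0 := by omega
        subst hw0
        rw [if_neg (show ¬ n * k + n ≤ n * (k + 0) by
          have : n * (k + 0) = n * k := by ring
          omega)]
        rw [Nat.choose_eq_zero_of_lt (show k + 0 + k - 1 < 2 * k by omega), Nat.cast_zero,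
          add_zero, add_zero]
    · have hlt : n * v < n * k := by
        nlinarith
      rw [if_neg (show ¬ n * k ≤ n * v by omega), if_neg (show ¬ n * k + n ≤ n * v by omega)]
      rw [Nat.choose_eq_zero_of_lt (show v + k < 2 * k by omega),
        Nat.choose_eq_zero_of_lt (show v + k - 1 < 2 * k by omega)]
      simp
  · rw [if_neg hd]
    have key : ∀ M : ℕ, n ∣ M → (if M ≤ N then
        (if n ∣ N - M then (((N - M) / n + 2 * k).choose (2 * k) : ℚ) else 0) else 0) = 0 := by
      intro M hM
      by_cases hle : M ≤ N
      · rw [if_pos hle, if_neg (show ¬ n ∣ N - M from fun h => hd (by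
          have := Nat.dvd_add h hM
          rwa [Nat.sub_add_cancel hle] at this))]
      · rw [if_neg hle]
    rw [key (n * k) (Dvd.intro k rfl), key (n * k + n) ⟨k + 1, by ring⟩, add_zero]

lemma ZQ_coeff (k N : ℕ) (hk : 1 ≤ k) :
    PowerSeries.coeff N (ZQ QO 1 (fun _ => 2 * k + 1)) =
      ∑ n ∈ Finset.Icc 1 N, if n ∣ N then
          (((N / n + k).choose (2 * k) : ℚ) + ((N / n + k - 1).choose (2 * k) : ℚ))
        else 0 := by
  rw [ZQ, PowerSeries.coeff_mk]
  refine Finset.sum_nbij' (fun f => f 0) (fun m => fun _ => m) ?_ ?_ ?_ ?_ ?_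
  · intro f hf
    simp only [Finset.mem_filter, Finset.mem_Iic] at hf
    obtain ⟨hle, _, hpos⟩ := hf
    simp only [Finset.mem_Icc]
    exact ⟨hpos 0, hle 0⟩
  · intro m hm
    simp only [Finset.mem_Icc] at hm
    simp only [Finset.mem_filter, Finset.mem_Iic]
    refine ⟨fun j => hm.2, strictAnti_fin_one _, fun j => hm.1⟩
  · intro f _
    funext j
    exact congrArg f (Subsingleton.elim 0 j)
  · intro m _
    rfl
  · intro f hf
    simp only [Finset.mem_filter, Finset.mem_Iic] at hf
    obtain ⟨hle, _, hpos⟩ := hf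
    have hn : 1 ≤ f 0 := hpos 0
    rw [Fin.prod_univ_one, QO_odd, inv_eq_D (f 0) hn (2 * k), ← coeff_term k (f 0) N hk hn]
    congr 1
    rw [← pow_mul]
    ring

lemma bracket_coeff (j N : ℕ) :
    PowerSeries.coeff N (bracket 1 (fun _ => j)) =
      ((j - 1).factorial : ℚ)⁻¹ *
        ∑ p ∈ (Finset.Icc 1 N ×ˢ Finset.Icc 1 N).filter (fun p => p.1 * p.2 = N),
          (p.2 : ℚ) ^ (j - 1) := by
  rw [bracket, PowerSeries.coeff_mk]
  congr 1
  · rw [Fin.prod_univ_one]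
  · refine Finset.sum_nbij' (fun uv => (uv.1 0, uv.2 0))
      (fun p => (fun _ => p.1, fun _ => p.2)) ?_ ?_ ?_ ?_ ?_
    · intro uv huv
      simp only [Finset.mem_filter, Finset.mem_product, Finset.mem_Iic] at huv
      obtain ⟨⟨h1, h2⟩, _, hu, hv, hsum⟩ := huv
      rw [Fin.sum_univ_one] at hsum
      simp only [Finset.mem_filter, Finset.mem_product, Finset.mem_Icc]
      exact ⟨⟨⟨hu 0, h1 0⟩, ⟨hv 0, h2 0⟩⟩, hsum⟩
    · intro p hp
      simp only [Finset.mem_filter, Finset.mem_product, Finset.mem_Icc] at hp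
      obtain ⟨⟨⟨hp1, hp2⟩, hp3, hp4⟩, hps⟩ := hp
      simp only [Finset.mem_filter, Finset.mem_product, Finset.mem_Iic]
      refine ⟨⟨fun _ => hp2, fun _ => hp4⟩, strictAnti_fin_one _, fun _ => hp1,
        fun _ => hp3, ?_⟩
      rw [Fin.sum_univ_one]
      exact hps
    · intro uv _
      refine Prod.ext ?_ ?_ <;> (funext i; exact congrArg _ (Subsingleton.elim 0 i))
    · intro p _
      rfl
    · intro uv _
      dsimp only
      rw [Fin.prod_univ_one]

lemma divisor_sum_eq (N : ℕ) (g : ℕ → ℕ → ℚ) :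
    (∑ n ∈ Finset.Icc 1 N, if n ∣ N then g n (N / n) else 0) =
      ∑ p ∈ (Finset.Icc 1 N ×ˢ Finset.Icc 1 N).filter (fun p => p.1 * p.2 = N),
        g p.1 p.2 := by
  rw [← Finset.sum_filter]
  refine Finset.sum_nbij' (fun n => (n, N / n)) (fun p => p.1) ?_ ?_ ?_ ?_ ?_
  · intro n hn
    simp only [Finset.mem_filter, Finset.mem_Icc] at hn
    obtain ⟨⟨h1, h2⟩, hd⟩ := hn
    simp only [Finset.mem_filter, Finset.mem_product, Finset.mem_Icc]
    exact ⟨⟨⟨h1, h2⟩, Nat.one_le_div_iff (by omega) |>.mpr h2, Nat.div_le_self N n⟩,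
      Nat.mul_div_cancel' hd⟩
  · intro p hp
    simp only [Finset.mem_filter, Finset.mem_product, Finset.mem_Icc] at hp
    obtain ⟨⟨⟨h1, h2⟩, h3, h4⟩, hps⟩ := hp
    simp only [Finset.mem_filter, Finset.mem_Icc]
    exact ⟨⟨h1, h2⟩, ⟨p.2, hps.symm⟩⟩
  · intro n _
    rfl
  · intro p hp
    simp only [Finset.mem_filter, Finset.mem_product, Finset.mem_Icc] at hp
    obtain ⟨⟨⟨h1, h2⟩, h3, h4⟩, hps⟩ := hp
    refine Prod.ext rfl ?_
    dsimp only
    rw [← hps, Nat.mul_div_cancel_left _ (by omega)]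
  · intro n hn
    simp only [Finset.mem_filter, Finset.mem_Icc] at hn
    rfl

/-- `Z(2k+1) = Σ_{j=2}^{2k+1} (b^{2k+1}_{k,j-1} + b^{2k+1}_{k+1,j-1})·[j]`. -/
theorem Z_odd_eq_sum_brackets (k : ℕ) (hk : 1 ≤ k) :
    ZQ QO 1 (fun _ => 2 * k + 1) =
      ∑ j ∈ Finset.Icc 2 (2 * k + 1),
        (bcoef (2 * k + 1) k (j - 1) + bcoef (2 * k + 1) (k + 1) (j - 1)) •
          bracket 1 (fun _ => j) := by
  ext N
  rw [ZQ_coeff k N hk, map_sum]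
  have hR : ∀ j ∈ Finset.Icc 2 (2 * k + 1),
      (PowerSeries.coeff N)
          ((bcoef (2 * k + 1) k (j - 1) + bcoef (2 * k + 1) (k + 1) (j - 1)) •
            bracket 1 (fun _ => j)) =
        ∑ p ∈ (Finset.Icc 1 N ×ˢ Finset.Icc 1 N).filter (fun p => p.1 * p.2 = N),
          (bcoef (2 * k + 1) k (j - 1) + bcoef (2 * k + 1) (k + 1) (j - 1)) *
            ((j - 1).factorial : ℚ)⁻¹ * (p.2 : ℚ) ^ (j - 1) := by
    intro j hj
    rw [map_smul, smul_eq_mul, bracket_coeff, ← mul_assoc, Finset.mul_sum]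
  rw [Finset.sum_congr rfl hR, Finset.sum_comm,
    divisor_sum_eq N (fun a b => ((b + k).choose (2 * k) : ℚ) + ((b + k - 1).choose (2 * k) : ℚ))]
  refine Finset.sum_congr rfl ?_
  intro p hp
  simp only [Finset.mem_filter, Finset.mem_product, Finset.mem_Icc] at hp
  exact (key k p.2 hk hp.1.2.1).symm
end

section
/- Let l ≥ 1, let s_1 ≥ 2 and s_2,…,s_l ≥ 1 be integers with k := s_1+…+s_l, and for each 1 ≤ j ≤ l let Q_j ∈ ℝ[t] be a polynomial with Q_j(0) = 0. Then lim_{q→1⁻} (1−q)^k · Σ_{n_1 > … > n_l > 0} ∏_{j=1}^l Q_j(q^{n_j})/(1−q^{n_j})^{s_j} = Q_1(1)·Q_2(1)⋯Q_l(1)·ζ(s_1,…,s_l), where the sum on the left converges absolutely for each real 0 < q < 1. -/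
open Polynomial

open scoped Classical

section AuxLimit

open Filter Set

private lemma exp_term_bound {s : ℕ} (hs : 1 ≤ s) {q : ℝ} (hq0 : 0 < q) (hq1 : q < 1)
    {n : ℕ} (hn : 0 < n) :
    q ^ n * ((1 - q) / (1 - q ^ n)) ^ s ≤ Real.exp 1 * (s.factorial : ℝ) / (n : ℝ) ^ s := by
  set x : ℝ := n * (1 - q) with hx
  have hn' : (0:ℝ) < n := by exact_mod_cast hn
  have hx0 : 0 < x := mul_pos hn' (by linarith)
  have hqn1 : q ^ n < 1 := pow_lt_one₀ hq0.le hq1 hn.ne'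
  have h1 : q ^ n ≤ Real.exp (-x) := by
    have : q ≤ Real.exp (q - 1) := by
      have := Real.add_one_le_exp (q - 1); linarith
    calc q ^ n ≤ (Real.exp (q - 1)) ^ n := pow_le_pow_left₀ hq0.le this n
      _ = Real.exp (n * (q - 1)) := by rw [← Real.exp_nat_mul]
      _ = Real.exp (-x) := by rw [hx]; ring_nf
  have h3 : Real.exp (-x) ≤ 1 / (1 + x) := by
    rw [Real.exp_neg, div_eq_inv_mul, mul_one]
    apply inv_anti₀ (by linarith)
    have := Real.add_one_le_exp x; linarith
  have h4 : x / (1 + x) ≤ 1 - q ^ n := by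
    have : 1 - 1 / (1 + x) = x / (1 + x) := by field_simp; ring
    linarith [h1.trans h3]
  have h5 : (1 - q) / (1 - q ^ n) ≤ (1 + x) / n := by
    rw [div_le_div_iff₀ (by linarith) hn']
    rw [div_le_iff₀ (by linarith : (0:ℝ) < 1 + x)] at h4
    calc (1 - q) * n = x := by rw [hx]; ring
      _ ≤ (1 - q ^ n) * (1 + x) := h4
      _ = (1 + x) * (1 - q ^ n) := mul_comm _ _
  have h6 : (1 + x) ^ s ≤ (s.factorial : ℝ) * Real.exp (1 + x) := by
    have h7 : (1 + x) ^ s / (s.factorial : ℝ) ≤ Real.exp (1 + x) := by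
      calc (1 + x) ^ s / (s.factorial : ℝ)
          ≤ ∑ i ∈ Finset.range (s + 1), (1 + x) ^ i / (i.factorial : ℝ) :=
            Finset.single_le_sum (f := fun i => (1 + x) ^ i / (i.factorial : ℝ))
              (fun i _ => by positivity) (Finset.self_mem_range_succ s)
        _ ≤ Real.exp (1 + x) := Real.sum_le_exp_of_nonneg (by linarith) _
    calc (1 + x) ^ s = (1 + x) ^ s / (s.factorial : ℝ) * (s.factorial : ℝ) := by
          field_simp
      _ ≤ Real.exp (1 + x) * (s.factorial : ℝ) :=
          mul_le_mul_of_nonneg_right h7 (by positivity)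
      _ = _ := by ring
  have hd0 : (0:ℝ) < (1 - q) / (1 - q ^ n) := div_pos (by linarith) (by linarith)
  have he : Real.exp (-x) * Real.exp (1 + x) = Real.exp 1 := by
    rw [← Real.exp_add]; norm_num
  calc q ^ n * ((1 - q) / (1 - q ^ n)) ^ s
      ≤ Real.exp (-x) * ((1 + x) / n) ^ s := by
        apply mul_le_mul h1 (pow_le_pow_left₀ hd0.le h5 s) (by positivity) (by positivity)
    _ = Real.exp (-x) * (1 + x) ^ s / (n : ℝ) ^ s := by rw [div_pow]; ring
    _ ≤ Real.exp (-x) * ((s.factorial : ℝ) * Real.exp (1 + x)) / (n : ℝ) ^ s := by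
        gcongr
    _ = Real.exp 1 * (s.factorial : ℝ) / (n : ℝ) ^ s := by rw [← he]; ring

private lemma poly_bound (Q : Polynomial ℝ) (h0 : Q.eval 0 = 0) :
    ∃ C : ℝ, 0 ≤ C ∧ ∀ t : ℝ, 0 ≤ t → t ≤ 1 → |Q.eval t| ≤ C * t := by
  have hdvd : X ∣ Q := Polynomial.X_dvd_iff.mpr (by rwa [Polynomial.coeff_zero_eq_eval_zero])
  obtain ⟨R, hR⟩ := hdvd
  obtain ⟨t₀, _, ht₀⟩ := isCompact_Icc.exists_isMaxOn (α := ℝ) (s := Icc (0:ℝ) 1)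
    (Set.nonempty_Icc.mpr zero_le_one)
    ((continuous_abs.comp R.continuous).continuousOn)
  refine ⟨|R.eval t₀|, abs_nonneg _, fun t ht0 ht1 => ?_⟩
  have : |R.eval t| ≤ |R.eval t₀| := ht₀ ⟨ht0, ht1⟩
  calc |Q.eval t| = |t * R.eval t| := by rw [hR]; simp [mul_comm]
    _ = t * |R.eval t| := by rw [abs_mul, abs_of_nonneg ht0]
    _ ≤ t * |R.eval t₀| := mul_le_mul_of_nonneg_left this ht0
    _ = |R.eval t₀| * t := mul_comm _ _


private lemma summable_pi_prod {u : ℕ → ℝ} (hu : Summable u) (h0 : ∀ n, 0 ≤ u n) (l : ℕ) :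
    Summable (fun m : Fin l → ℕ => ∏ j, u (m j)) := by
  induction l with
  | zero => exact Summable.of_finite
  | succ l ih =>
    rw [← Equiv.summable_iff (Fin.consEquiv (fun _ : Fin (l+1) => ℕ))]
    have e : ((fun m : Fin (l+1) → ℕ => ∏ j, u (m j)) ∘ (Fin.consEquiv (fun _ : Fin (l+1) => ℕ)))
        = fun p : ℕ × (Fin l → ℕ) => u p.1 * ∏ j, u (p.2 j) := by
      funext p
      simp [Fin.consEquiv, Fin.prod_univ_succ]
    rw [e]
    apply Summable.mul_of_nonneg hu ih
    · intro n; exact h0 n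
    · intro m; exact Finset.prod_nonneg fun j _ => h0 _

private lemma summable_S {l : ℕ} (hl : 1 ≤ l) (s : Fin l → ℕ)
    (hs1 : 2 ≤ s ⟨0, hl⟩) (hs : ∀ i, 1 ≤ s i) (D : Fin l → ℝ) (hD : ∀ j, 0 ≤ D j) :
    Summable (fun n : {n : Fin l → ℕ // StrictAnti n ∧ ∀ j, 0 < n j} =>
      ∏ j, D j / (n.1 j : ℝ) ^ s j) := by
  set S := {n : Fin l → ℕ // StrictAnti n ∧ ∀ j, 0 < n j}
  have hl' : (0:ℝ) < l := by exact_mod_cast hl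
  set p : ℝ := 1 + 1/l with hp
  have hp1 : 1 < p := by
    have : 0 < 1/(l:ℝ) := by positivity
    simp only [hp]; linarith
  have hu : Summable (fun t : ℕ => ((t : ℝ) + 1) ^ (-p)) := by
    have h1 : Summable (fun n : ℕ => ((n:ℝ) ^ p)⁻¹) := Real.summable_nat_rpow_inv.mpr hp1
    have h2 := (summable_nat_add_iff 1).mpr h1
    refine h2.congr fun n => ?_
    rw [Real.rpow_neg (by positivity)]
    push_cast
    rfl
  have hu0 : ∀ t : ℕ, 0 ≤ ((t:ℝ)+1) ^ (-p) := fun t => Real.rpow_nonneg (by positivity) _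
  have hH := summable_pi_prod hu hu0 l
  set φ : S → (Fin l → ℕ) :=
    fun n j => if h : (j:ℕ)+1 < l then n.1 j - n.1 ⟨(j:ℕ)+1, h⟩ - 1 else n.1 j - 1 with hφ
  have hstep : ∀ (n : S) (j : Fin l) (h : (j:ℕ)+1 < l), n.1 ⟨(j:ℕ)+1, h⟩ < n.1 j := by
    intro n j h
    exact n.2.1 (show j < ⟨(j:ℕ)+1, h⟩ by simp [Fin.lt_def])
  have hφinj : Function.Injective φ := by
    intro a b hab
    have key : ∀ m : ℕ, ∀ j : Fin l, l ≤ (j:ℕ) + m → a.1 j = b.1 j := by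
      intro m
      induction m with
      | zero => intro j hj; have := j.isLt; omega
      | succ m ih =>
        intro j hj
        have hab' := congrFun hab j
        by_cases h : (j:ℕ)+1 < l
        · have e1 : a.1 ⟨(j:ℕ)+1,h⟩ = b.1 ⟨(j:ℕ)+1,h⟩ := ih ⟨(j:ℕ)+1,h⟩ (by simp; omega)
          have l1 := hstep a j h
          have l2 := hstep b j h
          simp only [hφ, dif_pos h] at hab'
          omega
        · simp only [hφ, dif_neg h] at hab'
          have h1 := a.2.2 j; have h2 := b.2.2 j
          omega
    exact Subtype.ext (funext fun j => key l j (by have := j.isLt; omega))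
  have hato : ∀ (n : S) (j : Fin l), φ n j + 1 ≤ n.1 j := by
    intro n j; by_cases h : (j:ℕ)+1 < l
    · have := hstep n j h; simp only [hφ, dif_pos h]; omega
    · have := n.2.2 j; simp only [hφ, dif_neg h]; omega
  have hato0 : ∀ (n : S) (j : Fin l), φ n j + 1 ≤ n.1 ⟨0, hl⟩ := by
    intro n j
    exact (hato n j).trans (n.2.1.antitone (by simp [Fin.le_def]))
  have hkey : ∀ n : S, (∏ j, (φ n j + 1)) ^ (l+1) ≤ (∏ j, n.1 j ^ s j) ^ l := by
    intro n
    have hA1 : ∏ j, (φ n j + 1) ≤ ∏ j, n.1 j :=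
      Finset.prod_le_prod' fun j _ => hato n j
    have hA2 : ∏ j, (φ n j + 1) ≤ (n.1 ⟨0,hl⟩) ^ l := by
      calc ∏ j, (φ n j + 1) ≤ ∏ _j : Fin l, n.1 ⟨0,hl⟩ :=
            Finset.prod_le_prod' fun j _ => hato0 n j
        _ = (n.1 ⟨0,hl⟩) ^ l := by rw [Finset.prod_const]; simp
    have hPn : (n.1 ⟨0,hl⟩) * ∏ j, n.1 j ≤ ∏ j, n.1 j ^ s j := by
      have e2 : (n.1 ⟨0,hl⟩) * ∏ j, n.1 j
          = ∏ j, ((if j = ⟨0,hl⟩ then n.1 j else 1) * n.1 j) := by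
        rw [Finset.prod_mul_distrib, Finset.prod_ite_eq' Finset.univ (⟨0,hl⟩ : Fin l)
          (fun j => n.1 j)]
        simp
      rw [e2]
      apply Finset.prod_le_prod' fun j _ => ?_
      by_cases hj : j = (⟨0,hl⟩ : Fin l)
      · subst hj
        simp only [if_pos rfl]
        calc n.1 _ * n.1 _ = n.1 _ ^ 2 := (sq _).symm
          _ ≤ n.1 _ ^ s _ := Nat.pow_le_pow_right (n.2.2 _) hs1
      · simp only [if_neg hj, one_mul]
        calc n.1 j = n.1 j ^ 1 := (pow_one _).symm
          _ ≤ n.1 j ^ s j := Nat.pow_le_pow_right (n.2.2 _) (hs j)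
    calc (∏ j, (φ n j + 1))^(l+1) = (∏ j, (φ n j + 1))^l * ∏ j, (φ n j + 1) := by ring
      _ ≤ (∏ j, n.1 j)^l * (n.1 ⟨0,hl⟩)^l := Nat.mul_le_mul (Nat.pow_le_pow_left hA1 l) hA2
      _ = ((n.1 ⟨0,hl⟩) * ∏ j, n.1 j)^l := by rw [mul_pow]; ring
      _ ≤ (∏ j, n.1 j ^ s j)^l := Nat.pow_le_pow_left hPn l
  have hcomp : ∀ n : S, ∏ j, D j / (n.1 j:ℝ) ^ s j
      ≤ (∏ j, D j) * ∏ j, ((φ n j : ℝ) + 1) ^ (-p) := by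
    intro n
    have h1 : ∏ j, D j / (n.1 j:ℝ) ^ s j = (∏ j, D j) * ∏ j, (((n.1 j:ℝ)) ^ s j)⁻¹ := by
      rw [← Finset.prod_mul_distrib]
      exact Finset.prod_congr rfl fun j _ => div_eq_mul_inv _ _
    rw [h1]
    apply mul_le_mul_of_nonneg_left ?_ (Finset.prod_nonneg fun j _ => hD j)
    set A : ℕ := ∏ j, (φ n j + 1) with hA
    set M : ℕ := ∏ j, n.1 j ^ s j with hM
    have hA1 : 1 ≤ A := Finset.one_le_prod' fun j _ => by omega
    have hM1 : 1 ≤ M := Finset.one_le_prod' fun j _ => Nat.one_le_pow _ _ (n.2.2 j)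
    have hMA : (A:ℝ) ^ p ≤ (M:ℝ) := by
      have hl0 : l ≠ 0 := by omega
      rw [← pow_le_pow_iff_left₀ (Real.rpow_nonneg (Nat.cast_nonneg A) p)
        (Nat.cast_nonneg M) hl0]
      have e : ((A:ℝ) ^ p) ^ (l:ℕ) = (A:ℝ) ^ ((l+1:ℕ):ℝ) := by
        rw [← Real.rpow_natCast ((A:ℝ)^p) l, ← Real.rpow_mul (Nat.cast_nonneg A)]
        congr 1
        have hl0' : (l:ℝ) ≠ 0 := ne_of_gt hl'
        push_cast
        rw [hp]
        field_simp
      rw [e, Real.rpow_natCast]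
      exact_mod_cast hkey n
    have step : ∏ j, (((n.1 j:ℝ)) ^ s j)⁻¹ = ((M:ℝ))⁻¹ := by
      rw [Finset.prod_inv_distrib, hM]
      push_cast
      rfl
    have step2 : ∏ j, ((φ n j:ℝ)+1) ^ (-p) = ((A:ℝ)) ^ (-p) := by
      rw [hA]
      push_cast
      rw [Real.finset_prod_rpow _ _ (fun j _ => by positivity) (-p)]
    rw [step, step2, Real.rpow_neg (Nat.cast_nonneg A)]
    apply inv_anti₀ (by positivity) hMA
  apply Summable.of_nonneg_of_le
    (fun n => Finset.prod_nonneg fun j _ => div_nonneg (hD j) (by positivity)) hcomp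
  exact (hH.comp_injective hφinj).mul_left _

end AuxLimit

section MainLimit

open Filter Set

/-- for real `0 < q < 1` the q-analogue sum converges absolutely, and
`lim_{q→1⁻} (1-q)^k Σ_{n_1>…>n_l>0} ∏_j Q_j(q^{n_j})/(1-q^{n_j})^{s_j}
  = Q_1(1)⋯Q_l(1)·ζ(s_1,…,s_l)`. -/
theorem limit_q_analogue (l : ℕ) (hl : 1 ≤ l) (s : Fin l → ℕ)
    (hs1 : ∀ i : Fin l, (i : ℕ) = 0 → 2 ≤ s i) (hs : ∀ i, 1 ≤ s i)
    (Q : Fin l → Polynomial ℝ) (hQ0 : ∀ j, (Q j).eval 0 = 0) :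
    (∀ q : ℝ, 0 < q → q < 1 →
      Summable fun n : {n : Fin l → ℕ // StrictAnti n ∧ ∀ j, 0 < n j} =>
        ∏ j, (Q j).eval (q ^ n.1 j) / (1 - q ^ n.1 j) ^ s j) ∧
      Filter.Tendsto
        (fun q : ℝ => (1 - q) ^ (∑ j, s j) *
          ∑' n : {n : Fin l → ℕ // StrictAnti n ∧ ∀ j, 0 < n j},
            ∏ j, (Q j).eval (q ^ n.1 j) / (1 - q ^ n.1 j) ^ s j)
        (nhdsWithin 1 (Set.Iio 1))
        (nhds ((∏ j, (Q j).eval 1) *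
          ∑' n : {n : Fin l → ℕ // StrictAnti n ∧ ∀ j, 0 < n j},
            ∏ j, ((n.1 j : ℝ) ^ s j)⁻¹)) := by
  
  classical
  set S := {n : Fin l → ℕ // StrictAnti n ∧ ∀ j, 0 < n j} with hS
  choose C hC0 hC using fun j => poly_bound (Q j) (hQ0 j)
  set D : Fin l → ℝ := fun j => C j * (Real.exp 1 * ((s j).factorial : ℝ)) with hD
  have hD0 : ∀ j, 0 ≤ D j := fun j => mul_nonneg (hC0 j) (by positivity)
  set g : S → ℝ := fun n => ∏ j, D j / (n.1 j : ℝ) ^ s j with hg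
  have hgsum : Summable g := summable_S hl s (hs1 ⟨0, hl⟩ rfl) hs D hD0
  set F : ℝ → S → ℝ := fun q n =>
    ∏ j, (Q j).eval (q ^ n.1 j) / (1 - q ^ n.1 j) ^ s j with hF
  set G : ℝ → S → ℝ := fun q n =>
    ∏ j, ((1-q) ^ s j * ((Q j).eval (q ^ n.1 j) / (1 - q ^ n.1 j) ^ s j)) with hG
  have hGF : ∀ q n, G q n = (1-q) ^ (∑ j, s j) * F q n := by
    intro q n
    simp only [hG, hF]
    rw [Finset.prod_mul_distrib, Finset.prod_pow_eq_pow_sum]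
  have hGbound : ∀ q, 0 < q → q < 1 → ∀ n : S, |G q n| ≤ g n := by
    intro q hq0 hq1 n
    simp only [hG, hg]
    rw [Finset.abs_prod]
    apply Finset.prod_le_prod (fun j _ => abs_nonneg _) (fun j _ => ?_)
    have hnj := n.2.2 j
    have hqn1 : q ^ n.1 j < 1 := pow_lt_one₀ hq0.le hq1 hnj.ne'
    have hqn0 : 0 < q ^ n.1 j := pow_pos hq0 _
    have h1q : (0:ℝ) < 1 - q ^ n.1 j := by linarith
    rw [abs_mul, abs_div, abs_of_nonneg (pow_nonneg (by linarith : (0:ℝ) ≤ 1-q) _),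
      abs_of_nonneg (pow_nonneg h1q.le _)]
    calc (1-q)^(s j) * (|(Q j).eval (q ^ n.1 j)| / (1 - q ^ n.1 j)^(s j))
        ≤ (1-q)^(s j) * ((C j * q ^ n.1 j) / (1 - q ^ n.1 j)^(s j)) := by
          apply mul_le_mul_of_nonneg_left ?_ (pow_nonneg (by linarith : (0:ℝ) ≤ 1-q) _)
          exact div_le_div_of_nonneg_right (hC j _ hqn0.le hqn1.le) (pow_nonneg h1q.le _)
      _ = C j * (q ^ n.1 j * ((1-q)/(1 - q ^ n.1 j))^(s j)) := by
          rw [div_pow]; ring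
      _ ≤ C j * (Real.exp 1 * ((s j).factorial : ℝ) / (n.1 j : ℝ)^(s j)) := by
          apply mul_le_mul_of_nonneg_left (exp_term_bound (hs j) hq0 hq1 hnj) (hC0 j)
      _ = D j / (n.1 j : ℝ)^(s j) := by rw [hD]; ring
  have hGsum : ∀ q, 0 < q → q < 1 → Summable (G q) := by
    intro q hq0 hq1
    apply Summable.of_abs
    exact Summable.of_nonneg_of_le (fun n => abs_nonneg _) (hGbound q hq0 hq1) hgsum
  have hFsum : ∀ q, 0 < q → q < 1 → Summable (F q) := by
    intro q hq0 hq1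
    have hne : ((1-q) ^ (∑ j, s j)) ≠ 0 := pow_ne_zero _ (ne_of_gt (by linarith : (0:ℝ) < 1-q))
    refine ((hGsum q hq0 hq1).mul_left (((1-q) ^ (∑ j, s j))⁻¹)).congr fun n => ?_
    rw [hGF q n, inv_mul_cancel_left₀ hne]
  refine ⟨fun q hq0 hq1 => hFsum q hq0 hq1, ?_⟩
  set L : S → ℝ := fun n => ∏ j, ((Q j).eval 1 / (n.1 j : ℝ) ^ s j) with hL
  have hIoo : Set.Ioo (0:ℝ) 1 ∈ nhdsWithin (1:ℝ) (Set.Iio 1) :=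
    Ioo_mem_nhdsLT_of_mem (by constructor <;> norm_num)
  have hLlim : ∀ n : S, Filter.Tendsto (fun q => G q n)
      (nhdsWithin 1 (Set.Iio 1)) (nhds (L n)) := by
    intro n
    have hHt : Filter.Tendsto (fun q : ℝ =>
        ∏ j, ((Q j).eval (q ^ n.1 j) / (∑ i ∈ Finset.range (n.1 j), q ^ i) ^ s j))
        (nhdsWithin 1 (Set.Iio 1)) (nhds (L n)) := by
      simp only [hL]
      apply tendsto_finset_prod
      intro j _
      have hnum : Filter.Tendsto (fun q : ℝ => (Q j).eval (q ^ n.1 j))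
          (nhdsWithin 1 (Set.Iio 1)) (nhds ((Q j).eval 1)) := by
        have hc : Continuous fun q : ℝ => (Q j).eval (q ^ n.1 j) :=
          (Q j).continuous.comp (continuous_pow _)
        have := (hc.tendsto 1).mono_left (nhdsWithin_le_nhds (s := Set.Iio 1))
        simpa using this
      have hden : Filter.Tendsto (fun q : ℝ => (∑ i ∈ Finset.range (n.1 j), q ^ i) ^ s j)
          (nhdsWithin 1 (Set.Iio 1)) (nhds ((n.1 j : ℝ) ^ s j)) := by
        have hc : Continuous fun q : ℝ => (∑ i ∈ Finset.range (n.1 j), q ^ i) ^ s j :=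
          (continuous_finset_sum _ fun i _ => continuous_pow i).pow _
        have := (hc.tendsto 1).mono_left (nhdsWithin_le_nhds (s := Set.Iio 1))
        simpa using this
      exact hnum.div hden (by
        apply pow_ne_zero
        exact_mod_cast (n.2.2 j).ne')
    apply hHt.congr'
    filter_upwards [hIoo] with q hq
    simp only [hG]
    apply Finset.prod_congr rfl
    intro j _
    have hnj := n.2.2 j
    have hgeom : (1 - q) * (∑ i ∈ Finset.range (n.1 j), q ^ i) = 1 - q ^ n.1 j := by
      have := geom_sum_mul q (n.1 j)
      linarith [this]
    have h1q : (1:ℝ) - q ≠ 0 := by have := hq.2; intro h; linarith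
    have hSig : (∑ i ∈ Finset.range (n.1 j), q ^ i) ≠ 0 := by
      have : (0:ℝ) < ∑ i ∈ Finset.range (n.1 j), q ^ i :=
        Finset.sum_pos (fun i _ => pow_pos hq.1 i) (Finset.nonempty_range_iff.mpr hnj.ne')
      exact this.ne'
    rw [← hgeom, mul_pow]
    field_simp
  have hboundEv : ∀ᶠ q in nhdsWithin (1:ℝ) (Set.Iio 1), ∀ n : S, ‖G q n‖ ≤ g n := by
    filter_upwards [hIoo] with q hq n
    rw [Real.norm_eq_abs]
    exact hGbound q hq.1 hq.2 n
  have main := tendsto_tsum_of_dominated_convergence hgsum hLlim hboundEv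
  have hLval : ∑' n : S, L n = (∏ j, (Q j).eval 1) * ∑' n : S, ∏ j, ((n.1 j : ℝ) ^ s j)⁻¹ := by
    rw [← tsum_mul_left]
    apply tsum_congr
    intro n
    simp only [hL]
    rw [← Finset.prod_mul_distrib]
    exact Finset.prod_congr rfl fun j _ => div_eq_mul_inv _ _
  rw [← hLval]
  apply main.congr'
  filter_upwards [hIoo] with q hq
  rw [← tsum_mul_left]
  exact tsum_congr fun n => (hGF q n)


end MainLimit
end

section
/- In ℚ⟦q⟧ one has the identity Z(2,4) = [2,4] − (1/6)·[2,2], where Z(2,4) = Σ_{n_1 > n_2 > 0} q^{n_1}·((1−q^{n_1})^2)^{-1} · q^{2n_2}·((1−q^{n_2})^4)^{-1}. -/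
open Polynomial

open scoped Classical

noncomputable def pser (n : ℕ) (F : ℕ → ℚ) : PowerSeries ℚ :=
  PowerSeries.mk (fun N => if n ∣ N then F (N / n) else 0)

lemma step (n : ℕ) (hn : 0 < n) (F G : ℕ → ℚ) (hF : F 0 = 0)
    (hG : ∀ v, G v = F v - F (v - 1)) :
    pser n F * (1 - PowerSeries.X ^ n) = pser n G := by
  ext N
  rw [mul_sub, mul_one, map_sub, PowerSeries.coeff_mul_X_pow']
  simp only [pser, PowerSeries.coeff_mk]
  by_cases h1 : n ≤ N
  · simp only [if_pos h1]
    by_cases h2 : n ∣ N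
    · obtain ⟨k, rfl⟩ := h2
      have hk : 1 ≤ k := by
        rcases Nat.eq_zero_or_pos k with rfl | h; · omega
        exact h
      have h4 : n * k - n = n * (k - 1) := by rw [Nat.mul_sub, mul_one]
      have h3 : n ∣ n * k - n := h4 ▸ dvd_mul_right n (k-1)
      rw [if_pos (dvd_mul_right n k), if_pos h3, if_pos (dvd_mul_right n k),
        Nat.mul_div_cancel_left _ hn, h4, Nat.mul_div_cancel_left _ hn, hG]
    · have h3 : ¬ n ∣ N - n := fun h => h2 (by
        have := Nat.dvd_add h (dvd_refl n); rwa [Nat.sub_add_cancel h1] at this)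
      rw [if_neg h2, if_neg h3, if_neg h2, sub_zero]
  · simp only [if_neg h1, sub_zero]
    by_cases h2 : n ∣ N
    · have : N = 0 := by
        rcases Nat.eq_zero_or_pos N with rfl | h; · rfl
        exact absurd (Nat.le_of_dvd h h2) h1
      subst this
      simp [if_pos h2, hG, hF]
    · rw [if_neg h2, if_neg h2]

lemma pser_eq_X_pow (n : ℕ) (hn : 0 < n) (m : ℕ) (hm : 0 < m) (F : ℕ → ℚ)
    (hF : ∀ v, F v = if v = m then 1 else 0) :
    pser n F = (PowerSeries.X : PowerSeries ℚ) ^ (n * m) := by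
  ext N
  rw [PowerSeries.coeff_X_pow]
  simp only [pser, PowerSeries.coeff_mk]
  by_cases h2 : n ∣ N
  · obtain ⟨k, rfl⟩ := h2
    rw [if_pos (dvd_mul_right n k), Nat.mul_div_cancel_left _ hn, hF]
    have : n * k = n * m ↔ k = m :=
      ⟨fun h => Nat.eq_of_mul_eq_mul_left hn h, fun h => by rw [h]⟩
    simp [this]
  · rw [if_neg h2, if_neg (fun h : N = n * m => h2 (h ▸ dvd_mul_right n m))]

lemma constCoeff_ne (n : ℕ) (hn : 0 < n) (s : ℕ) :
    PowerSeries.constantCoeff ((1 - (PowerSeries.X : PowerSeries ℚ) ^ n) ^ s) ≠ 0 := by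
  rw [map_pow, map_sub, map_one, map_pow, PowerSeries.constantCoeff_X,
    zero_pow hn.ne', sub_zero, one_pow]
  exact one_ne_zero

lemma geom2 (n : ℕ) (hn : 0 < n) :
    (PowerSeries.X : PowerSeries ℚ) ^ n * ((1 - PowerSeries.X ^ n) ^ 2)⁻¹ =
      pser n (fun v => (v : ℚ)) := by
  symm
  rw [PowerSeries.eq_mul_inv_iff_mul_eq (constCoeff_ne n hn 2), pow_two, ← mul_assoc,
    step n hn _ (fun v => if v = 0 then 0 else 1) (by simp)
      (by rintro (_|v) <;> simp <;> push_cast <;> ring),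
    step n hn _ (fun v => if v = 1 then 1 else 0) (by simp)
      (by rintro (_|_|v) <;> simp),
    pser_eq_X_pow n hn 1 one_pos _ (fun v => rfl), mul_one]

lemma geom4 (n : ℕ) (hn : 0 < n) :
    ((PowerSeries.X : PowerSeries ℚ) ^ n) ^ 2 * ((1 - PowerSeries.X ^ n) ^ 4)⁻¹ =
      pser n (fun v => ((v : ℚ) ^ 3 - v) / 6) := by
  symm
  rw [PowerSeries.eq_mul_inv_iff_mul_eq (constCoeff_ne n hn 4),
    show (4 : ℕ) = 3 + 1 from rfl, pow_succ, ← mul_assoc,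
    show (3 : ℕ) = 2 + 1 from rfl, pow_succ, ← mul_assoc,
    pow_two, ← mul_assoc,
    step n hn _ (fun v => ((v : ℚ) ^ 2 - v) / 2) (by norm_num)
      (by rintro (_|v) <;> simp <;> push_cast <;> ring),
    step n hn _ (fun v => ((v - 1 : ℕ) : ℚ)) (by norm_num)
      (by rintro (_|v) <;> simp <;> push_cast <;> ring),
    step n hn _ (fun v => if v ≤ 1 then 0 else 1) (by norm_num)
      (by rintro (_|_|v) <;> simp <;> push_cast <;> ring),
    step n hn _ (fun v => if v = 2 then 1 else 0) (by norm_num)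
      (by rintro (_|_|_|v) <;> simp),
    pser_eq_X_pow n hn 2 two_pos _ (fun v => rfl), ← pow_mul]

lemma key_s17 (n : Fin 2 → ℕ) (h0 : 0 < n 0) (h1 : 0 < n 1) :
    (∏ j, Polynomial.aeval ((PowerSeries.X : PowerSeries ℚ) ^ n j) (QO (![2,4] j)) *
          ((1 - (PowerSeries.X : PowerSeries ℚ) ^ n j) ^ (![2,4] j : ℕ))⁻¹)
      = pser (n 0) (fun v => (v : ℚ)) * pser (n 1) (fun v => ((v : ℚ) ^ 3 - v) / 6) := by
  rw [Fin.prod_univ_two]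
  simp only [Matrix.cons_val_zero, Matrix.cons_val_one, Matrix.head_cons]
  rw [show QO 2 = X from by norm_num [QO], show QO 4 = X ^ 2 from by norm_num [QO]]
  simp only [map_pow, Polynomial.aeval_X]
  rw [geom2 _ h0, geom4 _ h1]


/-- `Z(2,4) = [2,4] - (1/6)[2,2]`. -/
theorem Z_two_four_eq :
    ZQ QO 2 ![2, 4] = bracket 2 ![2, 4] - (1 / 6 : ℚ) • bracket 2 ![2, 2] := by
  apply PowerSeries.ext; intro N
  rw [ZQ, bracket, bracket, map_sub, map_smul]
  simp only [PowerSeries.coeff_mk, smul_eq_mul]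
  -- LHS: expand each summand
  have hL : ∑ n ∈ ((Finset.Iic fun _ => N : Finset (Fin 2 → ℕ))).filter
        (fun n => StrictAnti n ∧ ∀ j, 0 < n j),
      PowerSeries.coeff N
        (∏ j, Polynomial.aeval ((PowerSeries.X : PowerSeries ℚ) ^ n j) (QO (![2,4] j)) *
          ((1 - (PowerSeries.X : PowerSeries ℚ) ^ n j) ^ (![2,4] j : ℕ))⁻¹)
      = ∑ n ∈ ((Finset.Iic fun _ => N : Finset (Fin 2 → ℕ))).filter
        (fun n => StrictAnti n ∧ ∀ j, 0 < n j), ∑ p ∈ Finset.HasAntidiagonal.antidiagonal N,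
        (if n 0 ∣ p.1 then ((p.1 / n 0 : ℕ) : ℚ) else 0) *
        (if n 1 ∣ p.2 then (((p.2 / n 1 : ℕ) : ℚ) ^ 3 - ((p.2 / n 1 : ℕ) : ℚ)) / 6 else 0) := by
    refine Finset.sum_congr rfl (fun n hn => ?_)
    rw [Finset.mem_filter] at hn
    rw [key_s17 n (hn.2.2 0) (hn.2.2 1), PowerSeries.coeff_mul]
    simp only [pser, PowerSeries.coeff_mk]
  rw [hL, ← Finset.sum_product']
  simp only [ite_zero_mul_ite_zero, ← Finset.sum_filter]
  simp only [Fin.prod_univ_two, Fin.sum_univ_two, Matrix.cons_val_zero, Matrix.cons_val_one,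
    Matrix.head_cons]
  norm_num [Nat.factorial, -Fin.forall_fin_two]
  rw [Finset.mul_sum, Finset.mul_sum, ← Finset.sum_sub_distrib]
  have hR : ∑ x ∈ (((Finset.Iic fun _ => N : Finset (Fin 2 → ℕ)) ×ˢ
            (Finset.Iic fun _ => N : Finset (Fin 2 → ℕ))).filter
          (fun uv => StrictAnti uv.1 ∧ (∀ j, 0 < uv.1 j) ∧ (∀ j, 0 < uv.2 j) ∧
            uv.1 0 * uv.2 0 + uv.1 1 * uv.2 1 = N)),
        (1 / 6 * ((x.2 0 : ℚ) * (x.2 1 : ℚ) ^ 3) - 1 / 6 * ((x.2 0 : ℚ) * (x.2 1 : ℚ)))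
      = ∑ x ∈ (((Finset.Iic fun _ => N : Finset (Fin 2 → ℕ)) ×ˢ
            (Finset.Iic fun _ => N : Finset (Fin 2 → ℕ))).filter
          (fun uv => StrictAnti uv.1 ∧ (∀ j, 0 < uv.1 j) ∧
            uv.1 0 * uv.2 0 + uv.1 1 * uv.2 1 = N)),
        (1 / 6 * ((x.2 0 : ℚ) * (x.2 1 : ℚ) ^ 3) - 1 / 6 * ((x.2 0 : ℚ) * (x.2 1 : ℚ))) := by
    refine Finset.sum_subset (Finset.monotone_filter_right _
      (fun x _ h => ⟨h.1, h.2.1, h.2.2.2⟩)) (fun x hx hx' => ?_)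
    simp only [Finset.mem_filter] at hx hx'
    have h01 : x.2 0 = 0 ∨ x.2 1 = 0 := by
      by_contra hc
      push_neg at hc
      exact hx' ⟨hx.1, hx.2.1, hx.2.2.1,
        Fin.forall_fin_two.mpr ⟨Nat.pos_of_ne_zero hc.1, Nat.pos_of_ne_zero hc.2⟩, hx.2.2.2⟩
    rcases h01 with h | h <;> rw [h] <;> push_cast <;> ring
  rw [hR]
  refine Finset.sum_nbij' (fun a => (a.1, ![a.2.1 / a.1 0, a.2.2 / a.1 1]))
    (fun b => (b.1, (b.1 0 * b.2 0, b.1 1 * b.2 1))) ?_ ?_ ?_ ?_ ?_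
  · intro a ha
    simp only [Finset.mem_filter, Finset.mem_product, Finset.mem_Iic,
      Finset.HasAntidiagonal.mem_antidiagonal, Pi.le_def] at ha ⊢
    obtain ⟨⟨⟨hle, hanti, hpos⟩, hsum⟩, hd1, hd2⟩ := ha
    refine ⟨⟨hle, ?_⟩, hanti, hpos, ?_⟩
    · refine Fin.forall_fin_two.mpr ⟨?_, ?_⟩ <;>
        simp only [Matrix.cons_val_zero, Matrix.cons_val_one, Matrix.head_cons] <;>
        exact le_trans (Nat.div_le_self _ _) (by omega)
    · simp only [Matrix.cons_val_zero, Matrix.cons_val_one, Matrix.head_cons]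
      rw [Nat.mul_div_cancel' hd1, Nat.mul_div_cancel' hd2, hsum]
  · intro b hb
    simp only [Finset.mem_filter, Finset.mem_product, Finset.mem_Iic,
      Finset.HasAntidiagonal.mem_antidiagonal, Pi.le_def] at hb ⊢
    obtain ⟨⟨hu, hv⟩, hanti, hpos, hsum⟩ := hb
    exact ⟨⟨⟨hu, hanti, hpos⟩, hsum⟩, dvd_mul_right _ _, dvd_mul_right _ _⟩
  · intro a ha
    simp only [Finset.mem_filter] at ha
    obtain ⟨-, hd1, hd2⟩ := ha
    simp only [Matrix.cons_val_zero, Matrix.cons_val_one, Matrix.head_cons]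
    exact Prod.ext rfl (Prod.ext (Nat.mul_div_cancel' hd1) (Nat.mul_div_cancel' hd2))
  · intro b hb
    simp only [Finset.mem_filter] at hb
    obtain ⟨-, -, hpos, -⟩ := hb
    refine Prod.ext rfl (funext (Fin.forall_fin_two.mpr ⟨?_, ?_⟩)) <;>
      simp only [Matrix.cons_val_zero, Matrix.cons_val_one, Matrix.head_cons]
    · exact Nat.mul_div_cancel_left _ (hpos 0)
    · exact Nat.mul_div_cancel_left _ (hpos 1)
  · intro a ha
    simp only [Matrix.cons_val_zero, Matrix.cons_val_one, Matrix.head_cons]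
    ring
end
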